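/- The column matching between optional squares. Let μ, ν be partitions such that there exists at least one partition λ₀ with λ₀ ≤ᵥ μ and λ₀ ≤ₕ ν. Then: distinct elements of T(μ,ν) have distinct second coordinates, T(μ,ν) is nonempty, and (letting t₁ denote the element of T(μ,ν) with minimal second coordinate) for every s = (i,j) ∈ S(μ,ν) the set {t ∈ T(μ,ν) : the second coordinate of t is > j} is nonempty; the function ψ sending each s = (i,j) ∈ S(μ,ν) to the element of T(μ,ν) having minimal second coordinate among those elements whose second coordinate exceeds j is an injection from S(μ,ν) into T(μ,ν) whose image is exactly T(μ,ν) \ {t₁}. -/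
import Mathlib


/-- A partition: weakly decreasing function `ℕ → ℕ` that is eventually zero. -/
def IsPartition (f : ℕ → ℕ) : Prop :=
  (∀ i, f (i + 1) ≤ f i) ∧ ∃ N, ∀ i, N ≤ i → f i = 0

/-- The size `|f|` of an eventually-zero function, as a finite sum. -/
noncomputable def psize (f : ℕ → ℕ) : ℕ := ∑ᶠ i, f i

/-- `HStrip a b` means `b/a` is a horizontal strip (written `a ≤ₕ b`). -/
def HStrip (a b : ℕ → ℕ) : Prop := ∀ i, a i ≤ b i ∧ b (i + 1) ≤ a i

/-- `VStrip a b` means `b/a` is a vertical strip (written `a ≤ᵥ b`). -/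
def VStrip (a b : ℕ → ℕ) : Prop := ∀ i, a i ≤ b i ∧ b i ≤ a i + 1

/-- The Young diagram (cell set) of a partition. -/
def cells (f : ℕ → ℕ) : Set (ℕ × ℕ) := {p | p.2 < f p.1}

/-- The transpose partition. -/
noncomputable def ptranspose (f : ℕ → ℕ) : ℕ → ℕ := fun j => {i : ℕ | j < f i}.ncard

/-- The set `S(μ,ν)` of optional squares for the intermediate shape. -/
def Sset (mu nu : ℕ → ℕ) : Set (ℕ × ℕ) :=
  {p | mu p.1 = p.2 + 1 ∧ ptranspose nu p.2 = p.1 + 1}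

/-- The set `T(μ,ν)` of optional squares for the resulting shape. -/
def Tset (mu nu : ℕ → ℕ) : Set (ℕ × ℕ) :=
  {p | ptranspose mu p.2 = p.1 ∧ nu p.1 = p.2}

/-- The Burge relations for `(λ, μ, ν, m)` satisfied by a pair `(κ, c)`,
with the convention `c (-1) = 0`. -/
def BurgeRel (lam mu nu : ℕ → ℕ) (m : ℕ) (kap c : ℕ → ℕ) : Prop :=
  (c 0 + mu 0 + nu 0 = lam 0 + kap 0) ∧
  (∀ i, c (i + 1) + mu (i + 1) + nu (i + 1) = lam (i + 1) + kap (i + 1) + c i) ∧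
  (∀ i, kap (i + 1) ≤ lam i) ∧
  (∀ i, 0 < c i → kap (i + 1) = lam i) ∧
  (∃ N, ∀ i, N ≤ i → c i = m)

lemma ptranspose_eq_iff {f : ℕ → ℕ} (hf : IsPartition f) (j i : ℕ) :
    ptranspose f j = i ↔ f i ≤ j ∧ ∀ k < i, j < f k := by
  have hanti : Antitone f := antitone_nat_of_succ_le hf.1
  obtain ⟨N, hN⟩ := hf.2
  have hex : ∃ m, f m ≤ j := ⟨N, by simp [hN N le_rfl]⟩
  have hset : {i : ℕ | j < f i} = Set.Iio (Nat.find hex) := by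
    ext m
    simp only [Set.mem_setOf_eq, Set.mem_Iio]
    constructor
    · intro hm
      by_contra h
      push_neg at h
      have := le_trans (hanti h) (Nat.find_spec hex)
      omega
    · intro hm
      exact lt_of_not_ge (Nat.find_min hex hm)
  have heq : ptranspose f j = Nat.find hex := by
    rw [ptranspose]
    rw [hset, ← Finset.coe_Iio, Set.ncard_coe_finset, Nat.card_Iio]
  rw [heq, Nat.find_eq_iff]
  constructor
  · rintro ⟨h1, h2⟩
    exact ⟨h1, fun k hk => lt_of_not_ge (h2 k hk)⟩
  · rintro ⟨h1, h2⟩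
    exact ⟨h1, fun k hk => not_le.2 (h2 k hk)⟩

def TRow (mu nu : ℕ → ℕ) (i : ℕ) : Prop := mu i ≤ nu i ∧ ∀ k < i, nu i < mu k

def SRow (mu nu : ℕ → ℕ) (i : ℕ) : Prop := nu (i + 1) < mu i ∧ mu i ≤ nu i

lemma mem_Tset_iff {mu nu : ℕ → ℕ} (hmu : IsPartition mu) (p : ℕ × ℕ) :
    p ∈ Tset mu nu ↔ TRow mu nu p.1 ∧ p.2 = nu p.1 := by
  rw [Tset, Set.mem_setOf_eq, ptranspose_eq_iff hmu]
  unfold TRow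
  constructor
  · rintro ⟨⟨h1, h2⟩, h3⟩
    refine ⟨⟨by omega, fun k hk => by have := h2 k hk; omega⟩, h3.symm⟩
  · rintro ⟨⟨h1, h2⟩, h3⟩
    exact ⟨⟨by omega, fun k hk => by have := h2 k hk; omega⟩, h3.symm⟩

lemma mem_Sset_iff {mu nu : ℕ → ℕ} (hnu : IsPartition nu) (p : ℕ × ℕ) :
    p ∈ Sset mu nu ↔ SRow mu nu p.1 ∧ mu p.1 = p.2 + 1 := by
  have hanti : Antitone nu := antitone_nat_of_succ_le hnu.1
  rw [Sset, Set.mem_setOf_eq, ptranspose_eq_iff hnu]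
  unfold SRow
  constructor
  · rintro ⟨h1, h2, h3⟩
    have := h3 p.1 (Nat.lt_succ_self _)
    exact ⟨⟨by omega, by omega⟩, h1⟩
  · rintro ⟨⟨h1, h2⟩, h3⟩
    refine ⟨h3, by omega, fun k hk => ?_⟩
    have : nu p.1 ≤ nu k := hanti (Nat.lt_succ_iff.mp hk)
    omega

lemma TRow_anti {mu nu : ℕ → ℕ} {a b : ℕ} (ha : TRow mu nu a) (hb : TRow mu nu b)
    (hab : a < b) : nu b < nu a := lt_of_lt_of_le (hb.2 a hab) ha.1

/-- If an S-row sees a T-row whose column is at least its own, the T-row is above. -/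
lemma TRow_le_of_SRow {mu nu : ℕ → ℕ} (hnu : IsPartition nu) {i a : ℕ}
    (hi : SRow mu nu i) (ha : TRow mu nu a) (h : mu i ≤ nu a) : a ≤ i := by
  by_contra hc
  have h1 : nu a ≤ nu (i + 1) := antitone_nat_of_succ_le hnu.1 (by omega)
  have h2 := hi.1
  omega

/-- The minimal good row above an S-row is a T-row, minimal among good rows above. -/
lemma SRow_next {mu nu : ℕ → ℕ} (hmu : IsPartition mu) (hnu : IsPartition nu)
    {i : ℕ} (hi : SRow mu nu i) :
    ∃ k, i < k ∧ TRow mu nu k ∧ ∀ m, i < m → mu m ≤ nu m → k ≤ m := by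
  have hanti : Antitone mu := antitone_nat_of_succ_le hmu.1
  have hanti' : Antitone nu := antitone_nat_of_succ_le hnu.1
  obtain ⟨N, hN⟩ := hmu.2
  have hex : ∃ m, i < m ∧ mu m ≤ nu m := by
    refine ⟨max (i + 1) N, by omega, ?_⟩
    rw [hN _ (le_max_right _ _)]
    exact Nat.zero_le _
  have hik : i < Nat.find hex := (Nat.find_spec hex).1
  have hgood : mu (Nat.find hex) ≤ nu (Nat.find hex) := (Nat.find_spec hex).2
  have hk1 : nu (Nat.find hex) < mu (Nat.find hex - 1) := by
    rcases Nat.lt_or_ge (i + 1) (Nat.find hex) with h | h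
    · have hbad : ¬ (i < Nat.find hex - 1 ∧ mu (Nat.find hex - 1) ≤ nu (Nat.find hex - 1)) :=
        Nat.find_min hex (by omega)
      have h2 : nu (Nat.find hex - 1) < mu (Nat.find hex - 1) := by
        by_contra hc
        exact hbad ⟨by omega, by omega⟩
      have h3 : nu (Nat.find hex) ≤ nu (Nat.find hex - 1) := hanti' (by omega)
      omega
    · have h1 : Nat.find hex = i + 1 := by omega
      rw [h1]
      simpa using hi.1
  refine ⟨Nat.find hex, hik, ⟨hgood, fun m hm => ?_⟩, fun m h1 h2 => Nat.find_min' hex ⟨h1, h2⟩⟩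
  have : mu (Nat.find hex - 1) ≤ mu m := hanti (by omega)
  omega

/-- The column matching between optional squares. -/
theorem binary_column_matching (mu nu : ℕ → ℕ)
    (hmu : IsPartition mu) (hnu : IsPartition nu)
    (hex : ∃ lam0, IsPartition lam0 ∧ VStrip lam0 mu ∧ HStrip lam0 nu) :
    Set.InjOn Prod.snd (Tset mu nu) ∧
    (Tset mu nu).Nonempty ∧
    (∀ s ∈ Sset mu nu, ∃ t ∈ Tset mu nu, s.2 < t.2) ∧
    ∀ (t1 : ℕ × ℕ) (ψ : (ℕ × ℕ) → (ℕ × ℕ)),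
      t1 ∈ Tset mu nu → (∀ t ∈ Tset mu nu, t1.2 ≤ t.2) →
      (∀ s ∈ Sset mu nu, ψ s ∈ Tset mu nu ∧ s.2 < (ψ s).2 ∧
        ∀ t ∈ Tset mu nu, s.2 < t.2 → (ψ s).2 ≤ t.2) →
      Set.InjOn ψ (Sset mu nu) ∧ ψ '' (Sset mu nu) = Tset mu nu \ {t1} := by
  clear hex
  classical
  have hanti_mu : Antitone mu := antitone_nat_of_succ_le hmu.1
  have hanti_nu : Antitone nu := antitone_nat_of_succ_le hnu.1
  -- Part 1: injectivity of snd on T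
  have hinj : Set.InjOn Prod.snd (Tset mu nu) := by
    intro t ht t' ht' h
    have h1 : ptranspose mu t.2 = t.1 := ht.1
    have h2 : ptranspose mu t'.2 = t'.1 := ht'.1
    have : t.1 = t'.1 := by rw [← h1, ← h2, h]
    exact Prod.ext this h
  -- the minimal good row is a T-row that is below every good row
  have hT0 : ∃ k0, TRow mu nu k0 ∧ ∀ m, mu m ≤ nu m → k0 ≤ m := by
    obtain ⟨N, hN⟩ := hmu.2
    have hg : ∃ m, mu m ≤ nu m := ⟨N, by rw [hN N le_rfl]; exact Nat.zero_le _⟩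
    refine ⟨Nat.find hg, ⟨Nat.find_spec hg, fun k hk => ?_⟩, fun m hm => Nat.find_min' hg hm⟩
    have h1 : ¬ mu k ≤ nu k := Nat.find_min hg hk
    have h2 : nu (Nat.find hg) ≤ nu k := hanti_nu (le_of_lt hk)
    omega
  obtain ⟨k0, hk0T, hk0min⟩ := hT0
  refine ⟨hinj, ?_, ?_, ?_⟩
  -- Part 2: T nonempty
  · exact ⟨(k0, nu k0), (mem_Tset_iff hmu _).2 ⟨hk0T, rfl⟩⟩
  -- Part 3
  · intro s hs
    obtain ⟨hsrow, hmus⟩ := (mem_Sset_iff hnu s).1 hs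
    refine ⟨(k0, nu k0), (mem_Tset_iff hmu _).2 ⟨hk0T, rfl⟩, ?_⟩
    have hle : k0 ≤ s.1 := hk0min s.1 hsrow.2
    have h1 : nu s.1 ≤ nu k0 := hanti_nu hle
    have h2 := hsrow.2
    show s.2 < nu k0
    omega
  -- Part 4
  · intro t1 ψ ht1 ht1min hψ
    obtain ⟨ht1row, ht1col⟩ := (mem_Tset_iff hmu t1).1 ht1
    -- injectivity helper
    have key : ∀ s ∈ Sset mu nu, ∀ s' ∈ Sset mu nu, ψ s = ψ s' → s'.1 < s.1 → False := by
      intro s hs s' hs' heq hlt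
      obtain ⟨hsrow, hmus⟩ := (mem_Sset_iff hnu s).1 hs
      obtain ⟨hsrow', hmus'⟩ := (mem_Sset_iff hnu s').1 hs'
      obtain ⟨k, hk1, hk2, hk3⟩ := SRow_next hmu hnu hsrow'
      have hki : k ≤ s.1 := hk3 s.1 hlt hsrow.2
      obtain ⟨hψT, hψgt, hψmin⟩ := hψ s hs
      obtain ⟨_, hψgt', _⟩ := hψ s' hs'
      obtain ⟨hψrow, hψcol⟩ := (mem_Tset_iff hmu (ψ s)).1 hψT
      -- ψ s = ψ s' has column > s'.2, so its row is ≤ s'.1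
      have hcol' : mu s'.1 ≤ nu ((ψ s).1) := by
        rw [← heq, hψcol] at hψgt'
        omega
      have hrow_le : (ψ s).1 ≤ s'.1 := TRow_le_of_SRow hnu hsrow' hψrow hcol'
      -- the T-row k lies strictly between, with column > s.2
      have hkcol : s.2 < nu k := by
        have h1 : nu s.1 ≤ nu k := hanti_nu hki
        have h2 := hsrow.2
        omega
      have hkT : (k, nu k) ∈ Tset mu nu := (mem_Tset_iff hmu _).2 ⟨hk2, rfl⟩
      have hminT := hψmin (k, nu k) hkT hkcol
      have hdec : nu k < nu ((ψ s).1) := TRow_anti hψrow hk2 (by omega)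
      rw [hψcol] at hminT
      simp only at hminT
      omega
    constructor
    · intro s hs s' hs' heq
      rcases lt_trichotomy s.1 s'.1 with h | h | h
      · exact absurd (key s' hs' s hs heq.symm h) (fun x => x)
      · obtain ⟨_, hmus⟩ := (mem_Sset_iff hnu s).1 hs
        obtain ⟨_, hmus'⟩ := (mem_Sset_iff hnu s').1 hs'
        refine Prod.ext h ?_
        rw [h] at hmus
        omega
      · exact absurd (key s hs s' hs' heq h) (fun x => x)
    · ext t
      constructor
      · rintro ⟨s, hs, rfl⟩
        obtain ⟨hψT, hψgt, hψmin⟩ := hψ s hs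
        refine ⟨hψT, ?_⟩
        obtain ⟨hsrow, hmus⟩ := (mem_Sset_iff hnu s).1 hs
        obtain ⟨k, hk1, hk2, _⟩ := SRow_next hmu hnu hsrow
        have hkT : (k, nu k) ∈ Tset mu nu := (mem_Tset_iff hmu _).2 ⟨hk2, rfl⟩
        have h1 : t1.2 ≤ nu k := ht1min (k, nu k) hkT
        have h2 : nu k ≤ nu (s.1 + 1) := hanti_nu hk1
        have h3 := hsrow.1
        intro hcontra
        rw [Set.mem_singleton_iff] at hcontra
        rw [hcontra] at hψgt
        omega
      · rintro ⟨ht, hne⟩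
        rw [Set.mem_singleton_iff] at hne
        obtain ⟨htrow, htcol⟩ := (mem_Tset_iff hmu t).1 ht
        -- t has strictly larger column than t1
        have hcolne : t1.2 < t.2 := by
          rcases Nat.lt_or_ge t1.2 t.2 with h | h
          · exact h
          · have : t.2 = t1.2 := le_antisymm h (ht1min t ht)
            exact absurd (hinj ht ht1 this) hne
        -- hence t1's row is above t's row
        have hrowlt : t.1 < t1.1 := by
          by_contra hc
          push_neg at hc
          rcases Nat.eq_or_lt_of_le hc with h | h
          · rw [← h] at htcol
            omega
          · have := TRow_anti ht1row htrow h
            omega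
        -- minimal T-row strictly above t.1
        have hk : ∃ k', t.1 < k' ∧ TRow mu nu k' ∧ ∀ m, t.1 < m → TRow mu nu m → k' ≤ m := by
          have hexk : ∃ k, t.1 < k ∧ TRow mu nu k := ⟨t1.1, hrowlt, ht1row⟩
          exact ⟨Nat.find hexk, (Nat.find_spec hexk).1, (Nat.find_spec hexk).2,
            fun m h1 h2 => Nat.find_min' hexk ⟨h1, h2⟩⟩
        obtain ⟨k', hk'1, hk'2, hk'min⟩ := hk
        -- the greatest good row below k'
        have hi : ∃ i, t.1 ≤ i ∧ mu i ≤ nu i ∧ i ≤ k' - 1 ∧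
            ∀ m, i < m → m ≤ k' - 1 → ¬ mu m ≤ nu m := by
          refine ⟨Nat.findGreatest (fun m => mu m ≤ nu m) (k' - 1),
            Nat.le_findGreatest (by omega) htrow.1,
            Nat.findGreatest_spec (P := fun m => mu m ≤ nu m)
              (by omega : t.1 ≤ k' - 1) htrow.1,
            Nat.findGreatest_le _,
            fun m h1 h2 => Nat.findGreatest_is_greatest (P := fun m => mu m ≤ nu m) h1 h2⟩
        obtain ⟨i, hile, higood, hilt, hibad⟩ := hi
        have hisrow : SRow mu nu i := by
          refine ⟨?_, higood⟩
          rcases Nat.eq_or_lt_of_le (show i + 1 ≤ k' by omega) with h | h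
          · have := hk'2.2 i (by omega)
            rw [h]
            omega
          · have hb : ¬ mu (i + 1) ≤ nu (i + 1) := hibad (i + 1) (by omega) (by omega)
            have : mu (i + 1) ≤ mu i := hanti_mu (by omega)
            omega
        have hmui : 1 ≤ mu i := by
          have := hisrow.1
          omega
        have hsS : (i, mu i - 1) ∈ Sset mu nu :=
          (mem_Sset_iff hnu _).2 ⟨hisrow, by show mu i = mu i - 1 + 1; omega⟩
        obtain ⟨hψT, hψgt, hψmin⟩ := hψ (i, mu i - 1) hsS
        obtain ⟨hψrow, hψcol⟩ := (mem_Tset_iff hmu _).1 hψT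
        have hψgt2 : mu i - 1 < (ψ (i, mu i - 1)).2 := hψgt
        -- t's column exceeds mu i - 1
        have htgt : (i, mu i - 1).2 < t.2 := by
          have h1 : nu i ≤ nu t.1 := hanti_nu hile
          show mu i - 1 < t.2
          omega
        have hle1 : (ψ (i, mu i - 1)).2 ≤ t.2 := hψmin t ht htgt
        -- conversely
        have hble : (ψ (i, mu i - 1)).1 ≤ t.1 := by
          have hb_le_i : (ψ (i, mu i - 1)).1 ≤ i :=
            TRow_le_of_SRow hnu hisrow hψrow (by rw [← hψcol]; omega)
          by_contra hc
          push_neg at hc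
          have := hk'min _ hc hψrow
          omega
        have hle2 : t.2 ≤ (ψ (i, mu i - 1)).2 := by
          rcases Nat.eq_or_lt_of_le hble with h | h
          · rw [hψcol, htcol, h]
          · have := TRow_anti hψrow htrow h
            omega
        exact ⟨(i, mu i - 1), hsS, hinj hψT ht (le_antisymm hle1 hle2)⟩
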